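/- arXiv:math/9902097 — 6 statements merged into one kernel-verified Lean document; each statement's English description precedes it below -/
import Mathlib

section
/- Let (x_n) be a frame in H with bounds A, B, i.e. A‖x‖² ≤ ∑_n |⟨x, x_n⟩|² ≤ B‖x‖² for all x ∈ H. Then (x_n) is c-equivalent to a tight frame, where c = (B/A)^{1/2}; that is, there exists a tight frame (y_n) in a Hilbert space K and an isomorphism T from the closed span of (x_n) onto the closed span of (y_n) with T x_n = y_n for all n and ‖T‖·‖T⁻¹‖ ≤ c. -/
/-!
Let `U : H → ℓ²` be the analysis operator `v ↦ (⟪v, x n⟫)ₙ`; the frame inequalities say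
`√A ‖v‖ ≤ ‖U v‖ ≤ √B ‖v‖`. Then `U†` maps the range `K` of `U` isomorphically onto `H`, with
`‖U†|_K‖ ≤ √B` and `‖(U†|_K)⁻¹‖ ≤ 1/√A`. Since `U† eₙ = xₙ` for the unit vectors `eₙ` of `ℓ²`,
`T := (U†|_K)⁻¹` sends `xₙ` to the orthogonal projection `yₙ` of `eₙ` onto `K`, and the projection
of an orthonormal basis onto a subspace is a tight frame there: `⟪w, yₙ⟫ = ⟪w, eₙ⟫ = w n` for `w ∈ K`.
-/

open scoped RealInnerProductSpace InnerProductSpace InnerProduct lp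

namespace ContinuousLinearMap

variable {𝕜 E F : Type*} [RCLike 𝕜] [NormedAddCommGroup E] [InnerProductSpace 𝕜 E]
  [CompleteSpace E] [NormedAddCommGroup F] [InnerProductSpace 𝕜 F] [CompleteSpace F]
  {U : E →L[𝕜] F} {c : ℝ}

theorem norm_apply_sq_le_norm_adjoint_apply_mul (U : E →L[𝕜] F) (v : E) :
    ‖U v‖ ^ 2 ≤ ‖(U†) (U v)‖ * ‖v‖ := by
  rw [← @inner_self_eq_norm_sq 𝕜, ← adjoint_inner_left]
  exact (RCLike.re_le_norm _).trans (norm_inner_le_norm _ _)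

theorem mul_norm_le_norm_adjoint_apply (hc : 0 ≤ c) (hU : ∀ v, c * ‖v‖ ≤ ‖U v‖) {w : F}
    (hw : w ∈ U.range) : c * ‖w‖ ≤ ‖(U†) w‖ := by
  obtain ⟨v, rfl⟩ := hw
  rw [coe_coe]
  rcases (norm_nonneg (U v)).eq_or_lt with h | h
  · rw [← h, mul_zero]
    exact norm_nonneg _
  refine le_of_mul_le_mul_right ?_ h
  calc c * ‖U v‖ * ‖U v‖ = c * ‖U v‖ ^ 2 := by ring
    _ ≤ c * (‖(U†) (U v)‖ * ‖v‖) :=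
      mul_le_mul_of_nonneg_left (U.norm_apply_sq_le_norm_adjoint_apply_mul v) hc
    _ = ‖(U†) (U v)‖ * (c * ‖v‖) := by ring
    _ ≤ ‖(U†) (U v)‖ * ‖U v‖ := mul_le_mul_of_nonneg_left (hU v) (norm_nonneg _)

theorem isUnit_adjoint_comp_self (hc : 0 < c) (hU : ∀ v, c * ‖v‖ ≤ ‖U v‖) :
    IsUnit (U† ∘L U) := by
  refine isUnit_of_forall_le_norm_inner_map _ (c := (c ^ 2).toNNReal) (by positivity) fun v => ?_
  rw [Real.coe_toNNReal _ (by positivity), comp_apply, adjoint_inner_left,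
    inner_self_eq_norm_sq_to_K, ← RCLike.ofReal_pow, RCLike.norm_ofReal, abs_sq,
    ← mul_pow, mul_comm]
  exact pow_le_pow_left₀ (by positivity) (hU v) 2

theorem norm_le_inv_mul_norm_adjoint_apply (hc : 0 < c) (hU : ∀ v, c * ‖v‖ ≤ ‖U v‖)
    (w : U.range) : ‖w‖ ≤ c⁻¹ * ‖(U†) w‖ := by
  rw [inv_mul_eq_div, le_div_iff₀ hc, mul_comm]
  exact mul_norm_le_norm_adjoint_apply hc.le hU w.2

noncomputable def adjointRangeEquiv (hc : 0 < c) (hU : ∀ v, c * ‖v‖ ≤ ‖U v‖) :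
    U.range ≃L[𝕜] E :=
  let e : U.range ≃ₗ[𝕜] E := .ofBijective ((U† : F →ₗ[𝕜] E) ∘ₗ U.range.subtype) <| by
    refine ⟨fun w w' h => ?_, fun v => ?_⟩
    · rw [← sub_eq_zero, ← norm_le_zero_iff]
      have h' : (U†) w = (U†) w' := h
      simpa [h'] using norm_le_inv_mul_norm_adjoint_apply hc hU (w - w')
    · obtain ⟨u, rfl⟩ := (isUnit_iff_bijective.mp (isUnit_adjoint_comp_self hc hU)).surjective v
      exact ⟨⟨U u, LinearMap.mem_range_self _ u⟩, rfl⟩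
  e.toContinuousLinearEquivOfBounds ‖U‖ c⁻¹
    (fun w => show ‖(U†) w‖ ≤ ‖U‖ * ‖(w : F)‖ by simpa using (U†).le_opNorm w)
    fun v => (norm_le_inv_mul_norm_adjoint_apply hc hU (e.symm v)).trans_eq
      (congrArg (c⁻¹ * ‖·‖) (e.apply_symm_apply v))

variable (hc : 0 < c) (hU : ∀ v, c * ‖v‖ ≤ ‖U v‖)

@[simp]
theorem adjointRangeEquiv_apply (w : U.range) : adjointRangeEquiv hc hU w = (U†) w := rfl

theorem norm_adjointRangeEquiv_le : ‖(adjointRangeEquiv hc hU : U.range →L[𝕜] E)‖ ≤ ‖U‖ :=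
  opNorm_le_bound _ (norm_nonneg U) fun w => by simpa using (U†).le_opNorm w

theorem norm_adjointRangeEquiv_symm_le :
    ‖((adjointRangeEquiv hc hU).symm : E →L[𝕜] U.range)‖ ≤ c⁻¹ :=
  opNorm_le_bound _ (inv_nonneg.mpr hc.le) fun v =>
    (norm_le_inv_mul_norm_adjoint_apply hc hU ((adjointRangeEquiv hc hU).symm v)).trans_eq <| by
      rw [← adjointRangeEquiv_apply hc hU, ContinuousLinearEquiv.apply_symm_apply]

/-- `(adjointRangeEquiv hc hU).symm (U† f)` is the orthogonal projection of `f` onto `U.range`: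
both have the same image under `U†`, and `ker U† = (U.range)ᗮ`. -/
theorem inner_adjointRangeEquiv_symm_adjoint_apply (w : U.range) (f : F) :
    ⟪(w : F), (adjointRangeEquiv hc hU).symm ((U†) f)⟫_𝕜 = ⟪(w : F), f⟫_𝕜 := by
  set z := (adjointRangeEquiv hc hU).symm ((U†) f)
  have hz : (U†) (z - f) = 0 := by
    rw [map_sub, ← adjointRangeEquiv_apply hc hU, ContinuousLinearEquiv.apply_symm_apply, sub_self]
  have : z - f ∈ U.rangeᗮ := by rwa [orthogonal_range]
  rw [← sub_eq_zero, ← inner_sub_right]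
  exact Submodule.inner_right_of_mem_orthogonal w.2 this

end ContinuousLinearMap

theorem lp.norm_sq_eq_tsum_sq {ι : Type*} (f : ℓ²(ι, ℝ)) : ‖f‖ ^ 2 = ∑' i, f i ^ 2 := by
  rw [← real_inner_self_eq_norm_sq, lp.inner_eq_tsum]
  exact tsum_congr fun i => by simp [sq]

theorem eq_zero_of_mul_norm_sq_nonpos {E : Type*} [NormedAddCommGroup E] {A : ℝ} (hA : 0 < A)
    {v : E} (h : A * ‖v‖ ^ 2 ≤ 0) : v = 0 :=
  norm_eq_zero.mp <| pow_eq_zero_iff two_ne_zero |>.mp <|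
    le_antisymm (nonpos_of_mul_nonpos_right h hA) (sq_nonneg _)

section Frame

variable {ι H : Type*} [NormedAddCommGroup H] [InnerProductSpace ℝ H] {x : ι → H} {A B : ℝ}

theorem summable_sq_inner_of_mul_norm_sq_le (hA : 0 < A) {v : H}
    (h : A * ‖v‖ ^ 2 ≤ ∑' i, ⟪v, x i⟫ ^ 2) : Summable fun i => ⟪v, x i⟫ ^ 2 := by
  by_contra hs
  rw [tsum_eq_zero_of_not_summable hs] at h
  obtain rfl := eq_zero_of_mul_norm_sq_nonpos hA h
  simp at hs

theorem topologicalClosure_span_range_eq_top [CompleteSpace H] (hA : 0 < A)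
    (h : ∀ v, A * ‖v‖ ^ 2 ≤ ∑' i, ⟪v, x i⟫ ^ 2) :
    (Submodule.span ℝ (Set.range x)).topologicalClosure = ⊤ := by
  rw [Submodule.topologicalClosure_eq_top_iff, Submodule.eq_bot_iff]
  intro v hv
  have hx : ∀ i, ⟪v, x i⟫ = 0 := fun i => by
    rw [real_inner_comm]
    exact hv _ (Submodule.subset_span ⟨i, rfl⟩)
  exact eq_zero_of_mul_norm_sq_nonpos hA ((h v).trans_eq (by simp [hx]))

variable (hsum : ∀ v, Summable fun i => ⟪v, x i⟫ ^ 2)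
  (hB : ∀ v, ∑' i, ⟪v, x i⟫ ^ 2 ≤ B * ‖v‖ ^ 2)

noncomputable def analysisOperator : H →L[ℝ] ℓ²(ι, ℝ) :=
  LinearMap.mkContinuous
    { toFun v := ⟨fun i => ⟪v, x i⟫, memℓp_gen (by simpa using hsum v)⟩
      map_add' u v := lp.ext <| funext fun i => inner_add_left u v (x i)
      map_smul' a v := lp.ext <| funext fun i => real_inner_smul_left v (x i) a }
    √B fun v => calc
      _ ≤ √(B * ‖v‖ ^ 2) :=
        (le_abs_self _).trans (Real.abs_le_sqrt ((lp.norm_sq_eq_tsum_sq _).trans_le (hB v)))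
      _ = √B * ‖v‖ := by rw [Real.sqrt_mul' _ (sq_nonneg _), Real.sqrt_sq (norm_nonneg _)]

@[simp]
theorem analysisOperator_apply (v : H) (i : ι) : analysisOperator hsum hB v i = ⟪v, x i⟫ := rfl

theorem norm_analysisOperator_apply_sq (v : H) :
    ‖analysisOperator hsum hB v‖ ^ 2 = ∑' i, ⟪v, x i⟫ ^ 2 :=
  lp.norm_sq_eq_tsum_sq _

theorem norm_analysisOperator_le : ‖analysisOperator hsum hB‖ ≤ √B :=
  LinearMap.mkContinuous_norm_le _ (Real.sqrt_nonneg B) _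

theorem adjoint_analysisOperator_single [CompleteSpace H] [DecidableEq ι] (i : ι) :
    ((analysisOperator hsum hB)†) (lp.single 2 i 1) = x i :=
  ext_inner_right ℝ fun v => by
    rw [ContinuousLinearMap.adjoint_inner_left, lp.inner_single_left, analysisOperator_apply]
    simp [real_inner_comm]

theorem sqrt_mul_norm_le_norm_analysisOperator_apply (hA : ∀ v, A * ‖v‖ ^ 2 ≤ ∑' i, ⟪v, x i⟫ ^ 2)
    (v : H) : √A * ‖v‖ ≤ ‖analysisOperator hsum hB v‖ := calc
  _ = √(A * ‖v‖ ^ 2) := by rw [Real.sqrt_mul' _ (sq_nonneg _), Real.sqrt_sq (norm_nonneg _)]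
  _ ≤ √(‖analysisOperator hsum hB v‖ ^ 2) :=
    Real.sqrt_le_sqrt ((hA v).trans_eq (norm_analysisOperator_apply_sq hsum hB v).symm)
  _ = ‖analysisOperator hsum hB v‖ := Real.sqrt_sq (norm_nonneg _)

theorem tsum_sq_inner_adjointRangeEquiv_symm [CompleteSpace H] {c : ℝ} (hc : 0 < c)
    (hU : ∀ v, c * ‖v‖ ≤ ‖analysisOperator hsum hB v‖) (w : (analysisOperator hsum hB).range) :
    ∑' i, ⟪w, (ContinuousLinearMap.adjointRangeEquiv hc hU).symm (x i)⟫ ^ 2 = ‖w‖ ^ 2 := by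
  classical
  have hcoord (i : ι) :
      ⟪w, (ContinuousLinearMap.adjointRangeEquiv hc hU).symm (x i)⟫ = (w : ℓ²(ι, ℝ)) i := by
    rw [← adjoint_analysisOperator_single hsum hB i, Submodule.coe_inner,
      ContinuousLinearMap.inner_adjointRangeEquiv_symm_adjoint_apply, lp.inner_single_right]
    simp
  simp_rw [hcoord]
  rw [Submodule.coe_norm, lp.norm_sq_eq_tsum_sq]

end Frame

theorem frame_equivalent_tight_frame_general
    {H : Type*} [NormedAddCommGroup H] [InnerProductSpace ℝ H] [CompleteSpace H]
    (x : ℕ → H) (A B : ℝ) (hA : 0 < A)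
    (hframe : ∀ v : H,
      A * ‖v‖ ^ 2 ≤ ∑' n, ⟪v, x n⟫ ^ 2 ∧ ∑' n, ⟪v, x n⟫ ^ 2 ≤ B * ‖v‖ ^ 2) :
    ∃ (K : Submodule ℝ (lp (fun _ : ℕ => ℝ) 2)) (y : ℕ → K)
      (T : (Submodule.span ℝ (Set.range x)).topologicalClosure ≃L[ℝ] K),
      (∀ v : K, ∑' n, ⟪v, y n⟫ ^ 2 = ‖v‖ ^ 2) ∧
      (∀ n, T ⟨x n, Submodule.le_topologicalClosure _
          (Submodule.subset_span (Set.mem_range_self n))⟩ = y n) ∧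
      ‖(T : (Submodule.span ℝ (Set.range x)).topologicalClosure →L[ℝ] K)‖ *
        ‖(T.symm : K →L[ℝ] (Submodule.span ℝ (Set.range x)).topologicalClosure)‖ ≤
        Real.sqrt (B / A) := by
  have hsum v := summable_sq_inner_of_mul_norm_sq_le hA (hframe v).1
  have hB v := (hframe v).2
  set U := analysisOperator hsum hB
  have hU := sqrt_mul_norm_le_norm_analysisOperator_apply hsum hB fun v => (hframe v).1
  set e := ContinuousLinearMap.adjointRangeEquiv (Real.sqrt_pos.2 hA) hU
  set toH := LinearIsometryEquiv.ofTop _ _ <|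
    topologicalClosure_span_range_eq_top hA fun v => (hframe v).1
  refine ⟨U.range, fun n => e.symm (x n), toH.toContinuousLinearEquiv.trans e.symm,
    tsum_sq_inner_adjointRangeEquiv_symm hsum hB _ hU, fun n => rfl, ?_⟩
  rw [Real.sqrt_div' _ hA.le, div_eq_inv_mul]
  gcongr
  · rw [← ContinuousLinearEquiv.comp_coe]
    exact (ContinuousLinearMap.opNorm_comp_linearIsometryEquiv _ toH).trans_le
      (ContinuousLinearMap.norm_adjointRangeEquiv_symm_le _ hU)
  · have hsymm : ((toH.toContinuousLinearEquiv.trans e.symm).symm :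
          U.range →L[ℝ] (Submodule.span ℝ (Set.range x)).topologicalClosure) =
        (toH.symm : H →L[ℝ] _).comp (e : U.range →L[ℝ] H) := rfl
    rw [hsymm, ContinuousLinearMap.opNorm_linearIsometryEquiv_comp]
    exact (ContinuousLinearMap.norm_adjointRangeEquiv_le _ hU).trans (norm_analysisOperator_le _ _)

/-- A frame with bounds `A, B` is `√(B/A)`-equivalent to a tight frame: there is a
Hilbert space `K` (realized as a subspace of `ℓ₂`), a tight frame `(y n)` in `K`, and an
isomorphism `T` of the closed linear span of `(x n)` onto `K` (the closed span of `(y n)`,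
which is dense in `K`) with `T (x n) = y n` and `‖T‖ ‖T⁻¹‖ ≤ √(B/A)`. -/
theorem frame_equivalent_tight_frame
    {H : Type*} [NormedAddCommGroup H] [InnerProductSpace ℝ H] [CompleteSpace H]
    (x : ℕ → H) (A B : ℝ) (hA : 0 < A) (hAB : A ≤ B)
    (hframe : ∀ v : H,
      A * ‖v‖ ^ 2 ≤ ∑' n, ⟪v, x n⟫ ^ 2 ∧ ∑' n, ⟪v, x n⟫ ^ 2 ≤ B * ‖v‖ ^ 2) :
    ∃ (K : Submodule ℝ (lp (fun _ : ℕ => ℝ) 2)) (y : ℕ → K)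
      (T : (Submodule.span ℝ (Set.range x)).topologicalClosure ≃L[ℝ] K),
      (∀ v : K, ∑' n, ⟪v, y n⟫ ^ 2 = ‖v‖ ^ 2) ∧
      (∀ n, T ⟨x n, Submodule.le_topologicalClosure _
          (Submodule.subset_span (Set.mem_range_self n))⟩ = y n) ∧
      ‖(T : (Submodule.span ℝ (Set.range x)).topologicalClosure →L[ℝ] K)‖ *
        ‖(T.symm : K →L[ℝ] (Submodule.span ℝ (Set.range x)).topologicalClosure)‖ ≤
        Real.sqrt (B / A) :=
  frame_equivalent_tight_frame_general x A B hA hframe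
end

section
/- Let (y_j)_{j=1}^m be a tight frame in ℓ₂ⁿ with ‖y_j‖ = √(n/m) for every j, and let P be a k-dimensional orthogonal projection in ℓ₂ⁿ. Then for every δ > 0, the number of indices j with ‖(I − P) y_j‖ ≥ δ √(n/m) is at least (1 − δ² − k/n)·m. -/
open scoped RealInnerProductSpace

/-- Let `(y j)_{j=1}^m` be a tight frame in `ℓ₂ⁿ` with `‖y j‖ = √(n/m)` for all `j`,
and `P` a `k`-dimensional orthogonal projection in `ℓ₂ⁿ`.  Then for every `δ > 0`,
`|{ j : ‖(I - P) y j‖ ≥ δ √(n/m) }| ≥ (1 - δ² - k/n) m`. -/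
theorem tight_frame_far_from_projection_count
    (n m k : ℕ) (hn : 0 < n) (hm : 0 < m)
    (y : Fin m → EuclideanSpace ℝ (Fin n))
    (htight : ∀ v : EuclideanSpace ℝ (Fin n), ∑ j, ⟪v, y j⟫ ^ 2 = ‖v‖ ^ 2)
    (hnorm : ∀ j, ‖y j‖ = Real.sqrt ((n : ℝ) / m))
    (P : EuclideanSpace ℝ (Fin n) →L[ℝ] EuclideanSpace ℝ (Fin n))
    (hidem : ∀ v, P (P v) = P v) (hsa : IsSelfAdjoint P)
    (hrank : Module.finrank ℝ
      (LinearMap.range (P : EuclideanSpace ℝ (Fin n) →ₗ[ℝ] EuclideanSpace ℝ (Fin n))) = k)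
    (δ : ℝ) (hδ : 0 < δ) :
    ((1 : ℝ) - δ ^ 2 - (k : ℝ) / n) * m ≤
      ((Finset.univ.filter
        fun j => δ * Real.sqrt ((n : ℝ) / m) ≤ ‖y j - P (y j)‖).card : ℝ) := by
  have hnm : (0:ℝ) ≤ (n:ℝ)/m := by positivity
  have hsym' : ∀ u v : EuclideanSpace ℝ (Fin n), ⟪P u, v⟫ = ⟪u, P v⟫ := fun u v =>
    (ContinuousLinearMap.isSelfAdjoint_iff_isSymmetric.mp hsa) u v
  have hysq : ∀ j, ‖y j‖ ^ 2 = (n:ℝ)/m := by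
    intro j; rw [hnorm j, Real.sq_sqrt hnm]
  have hinner0 : ∀ j, ⟪P (y j), y j - P (y j)⟫ = 0 := by
    intro j
    rw [inner_sub_right]
    have h1 : ⟪P (y j), P (y j)⟫ = ⟪P (y j), y j⟫ := by
      rw [hsym' (y j) (P (y j)), hidem, real_inner_comm]
    rw [h1, sub_self]
  have hpyth : ∀ j, ‖P (y j)‖ ^ 2 + ‖y j - P (y j)‖ ^ 2 = ‖y j‖ ^ 2 := by
    intro j
    have h := norm_add_sq_real (P (y j)) (y j - P (y j))
    rw [hinner0 j] at h
    simp only [add_sub_cancel, mul_zero, add_zero] at h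
    linarith
  set V := LinearMap.range (P : EuclideanSpace ℝ (Fin n) →ₗ[ℝ] EuclideanSpace ℝ (Fin n))
    with hV
  let b : OrthonormalBasis (Fin k) ℝ V :=
    (stdOrthonormalBasis ℝ V).reindex (finCongr hrank)
  have hPb : ∀ i, P ((b i : EuclideanSpace ℝ (Fin n))) = (b i : EuclideanSpace ℝ (Fin n)) := by
    intro i
    obtain ⟨v, hv⟩ := (b i).2
    rw [← hv]; exact hidem v
  have hpar : ∀ w : V, ∑ i, ⟪(b i : EuclideanSpace ℝ (Fin n)), (w : EuclideanSpace ℝ (Fin n))⟫ ^ 2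
      = ‖(w : EuclideanSpace ℝ (Fin n))‖ ^ 2 := by
    intro w
    have h := b.sum_inner_mul_inner w w
    rw [real_inner_self_eq_norm_sq] at h
    calc ∑ i, ⟪(b i : EuclideanSpace ℝ (Fin n)), (w : EuclideanSpace ℝ (Fin n))⟫ ^ 2
        = ∑ i, ⟪w, b i⟫ * ⟪b i, w⟫ := by
          refine Finset.sum_congr rfl fun i _ => ?_
          rw [sq, ← Submodule.coe_inner, real_inner_comm w (b i), Submodule.coe_inner]
      _ = ‖w‖ ^ 2 := h
      _ = ‖(w : EuclideanSpace ℝ (Fin n))‖ ^ 2 := by rw [Submodule.norm_coe]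
  have hPsum : ∑ j, ‖P (y j)‖ ^ 2 = (k : ℝ) := by
    have h1 : ∀ j, ‖P (y j)‖ ^ 2 = ∑ i, ⟪(b i : EuclideanSpace ℝ (Fin n)), y j⟫ ^ 2 := by
      intro j
      have hmem : P (y j) ∈ V := ⟨y j, rfl⟩
      have h := hpar ⟨P (y j), hmem⟩
      simp only [Submodule.coe_mk] at h
      rw [← h]
      refine Finset.sum_congr rfl fun i _ => ?_
      congr 1
      rw [← hsym' (b i : EuclideanSpace ℝ (Fin n)) (y j), hPb i]
    calc ∑ j, ‖P (y j)‖ ^ 2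
        = ∑ j, ∑ i, ⟪(b i : EuclideanSpace ℝ (Fin n)), y j⟫ ^ 2 :=
          Finset.sum_congr rfl fun j _ => h1 j
      _ = ∑ i, ∑ j, ⟪(b i : EuclideanSpace ℝ (Fin n)), y j⟫ ^ 2 := Finset.sum_comm
      _ = ∑ i : Fin k, ‖(b i : EuclideanSpace ℝ (Fin n))‖ ^ 2 :=
          Finset.sum_congr rfl fun i _ => htight (b i : EuclideanSpace ℝ (Fin n))
      _ = ∑ _i : Fin k, (1:ℝ) := by
          refine Finset.sum_congr rfl fun i _ => ?_
          rw [Submodule.norm_coe, b.orthonormal.1 i]; norm_num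
      _ = (k : ℝ) := by simp
  have hm' : (0:ℝ) < m := by exact_mod_cast hm
  have hn' : (0:ℝ) < n := by exact_mod_cast hn
  have hsumy : ∑ j, ‖y j‖ ^ 2 = (n : ℝ) := by
    rw [Finset.sum_congr rfl fun j _ => hysq j, Finset.sum_const, Finset.card_univ,
      Fintype.card_fin, nsmul_eq_mul]
    field_simp
  have hsumres : ∑ j, ‖y j - P (y j)‖ ^ 2 = (n : ℝ) - k := by
    have h : ∑ j, (‖P (y j)‖ ^ 2 + ‖y j - P (y j)‖ ^ 2) = (n:ℝ) := by
      rw [Finset.sum_congr rfl fun j _ => hpyth j, hsumy]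
    rw [Finset.sum_add_distrib, hPsum] at h
    linarith
  set s := Finset.univ.filter
      fun j => δ * Real.sqrt ((n : ℝ) / m) ≤ ‖y j - P (y j)‖ with hs
  have hbound : (n : ℝ) - k ≤ (s.card : ℝ) * ((n:ℝ)/m) + (m:ℝ) * (δ^2 * ((n:ℝ)/m)) := by
    rw [← hsumres]
    calc ∑ j, ‖y j - P (y j)‖ ^ 2
        = ∑ j ∈ s, ‖y j - P (y j)‖ ^ 2 + ∑ j ∈ sᶜ, ‖y j - P (y j)‖ ^ 2 :=
          (Finset.sum_add_sum_compl s _).symm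
      _ ≤ (s.card : ℝ) * ((n:ℝ)/m) + (m:ℝ) * (δ^2 * ((n:ℝ)/m)) := by
          refine add_le_add ?_ ?_
          · calc ∑ j ∈ s, ‖y j - P (y j)‖ ^ 2 ≤ ∑ _j ∈ s, ((n:ℝ)/m) := by
                  refine Finset.sum_le_sum fun j _ => ?_
                  have h := hpyth j
                  have h2 : (0:ℝ) ≤ ‖P (y j)‖ ^ 2 := sq_nonneg _
                  rw [hysq j] at h; linarith
              _ = (s.card : ℝ) * ((n:ℝ)/m) := by
                  rw [Finset.sum_const, nsmul_eq_mul]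
          · calc ∑ j ∈ sᶜ, ‖y j - P (y j)‖ ^ 2 ≤ ∑ _j ∈ sᶜ, (δ^2 * ((n:ℝ)/m)) := by
                  refine Finset.sum_le_sum fun j hj => ?_
                  simp only [hs, Finset.mem_compl, Finset.mem_filter, Finset.mem_univ,
                    true_and, not_le] at hj
                  have h0 : (0:ℝ) ≤ ‖y j - P (y j)‖ := norm_nonneg _
                  have hsq : (δ * Real.sqrt ((n:ℝ)/m))^2 = δ^2 * ((n:ℝ)/m) := by
                    rw [mul_pow, Real.sq_sqrt hnm]
                  nlinarith
              _ ≤ (m:ℝ) * (δ^2 * ((n:ℝ)/m)) := by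
                  rw [Finset.sum_const, nsmul_eq_mul]
                  have hc : (sᶜ.card : ℝ) ≤ (m : ℝ) := by
                    have := Finset.card_le_univ sᶜ
                    simp only [Finset.card_univ, Fintype.card_fin] at this
                    exact_mod_cast this
                  have hnn : (0:ℝ) ≤ δ^2 * ((n:ℝ)/m) := by positivity
                  exact mul_le_mul_of_nonneg_right hc hnn
  have hcc : (0:ℝ) ≤ (s.card : ℝ) := Nat.cast_nonneg _
  have hne : (n:ℝ) ≠ 0 := ne_of_gt hn'
  have hme : (m:ℝ) ≠ 0 := ne_of_gt hm'
  have h3 : ((n:ℝ) - k) * m ≤ (s.card : ℝ) * n + δ^2 * n * m := by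
    have h := mul_le_mul_of_nonneg_right hbound (le_of_lt hm')
    have e : ((s.card : ℝ) * ((n:ℝ)/m) + (m:ℝ) * (δ^2 * ((n:ℝ)/m))) * m
        = (s.card : ℝ) * n + δ^2 * n * m := by field_simp
    rw [e] at h
    exact h
  have hk : (k:ℝ)/n * n = k := div_mul_cancel₀ _ hne
  nlinarith [h3, hk, hm'.le, hn'.le]
end

section
/- Let (x_j) be a frame in an infinite-dimensional Hilbert space H with all x_j ≠ 0, and let z_j = x_j/‖x_j‖. Then for every finite-dimensional subspace E ⊂ H, sup_j dist(z_j, E) = 1. -/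
open scoped RealInnerProductSpace

/-!
If every normalized vector `zⱼ = xⱼ / ‖xⱼ‖` stayed within distance `s < 1` of `E`, Pythagoras
would give `‖P_E xⱼ‖² ≥ (1 - s²) ‖xⱼ‖²`. For an orthonormal basis `(eᵢ)` of `E`,
`∑ⱼ ‖P_E xⱼ‖² = ∑ᵢ ∑ⱼ ⟪eᵢ, xⱼ⟫²` is finite by the frame inequality, so `∑ⱼ ‖xⱼ‖² < ∞`.
No frame of an infinite-dimensional space is square-summable: a nonzero vector orthogonal to
`x₀, …, x_{N-1}`, where `∑_{j ≥ N} ‖xⱼ‖² < A`, violates the lower frame bound.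
-/

namespace Submodule

variable {𝕜 E : Type*} [RCLike 𝕜] [NormedAddCommGroup E] [InnerProductSpace 𝕜 E]
  (K : Submodule 𝕜 E) [K.HasOrthogonalProjection]

theorem infDist_eq_norm_sub_starProjection (y : E) :
    Metric.infDist y K = ‖y - K.starProjection y‖ := by
  rw [Metric.infDist_eq_iInf, starProjection_minimal]
  simp only [dist_eq_norm]
  rfl

theorem norm_sq_starProjection_eq_norm_sq_sub_infDist_sq (y : E) :
    ‖K.starProjection y‖ ^ 2 = ‖y‖ ^ 2 - Metric.infDist y K ^ 2 := by
  rw [infDist_eq_norm_sub_starProjection, ← starProjection_orthogonal_val,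
    norm_sq_eq_add_norm_sq_starProjection y K]
  ring

end Submodule

section Real

variable {H : Type*} [NormedAddCommGroup H] [InnerProductSpace ℝ H]

theorem OrthonormalBasis.sum_sq_inner_eq_norm_sq_starProjection {ι : Type*} [Fintype ι]
    {K : Submodule ℝ H} [K.HasOrthogonalProjection] (b : OrthonormalBasis ι ℝ K) (y : H) :
    ∑ i, ⟪(b i : H), y⟫ ^ 2 = ‖K.starProjection y‖ ^ 2 := by
  simp only [Submodule.starProjection_apply, Submodule.norm_coe, ← b.sum_sq_inner_right,
    Submodule.inner_orthogonalProjectionOnto_eq_of_mem_left]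

theorem Submodule.norm_sq_mul_le_norm_sq_starProjection (K : Submodule ℝ H)
    [K.HasOrthogonalProjection] {y : H} {s : ℝ} (hs : Metric.infDist (‖y‖⁻¹ • y) K ≤ s) :
    ‖y‖ ^ 2 * (1 - s ^ 2) ≤ ‖K.starProjection y‖ ^ 2 := by
  rcases eq_or_ne y 0 with rfl | hy
  · simp
  have hdist : Metric.infDist (‖y‖⁻¹ • y) K ^ 2 ≤ s ^ 2 :=
    pow_le_pow_left₀ Metric.infDist_nonneg hs 2
  have hy' : y = ‖y‖ • (‖y‖⁻¹ • y) := by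
    rw [smul_smul, mul_inv_cancel₀ (norm_ne_zero_iff.mpr hy), one_smul]
  calc ‖y‖ ^ 2 * (1 - s ^ 2)
      ≤ ‖y‖ ^ 2 * (1 - Metric.infDist (‖y‖⁻¹ • y) K ^ 2) := by gcongr
    _ = ‖y‖ ^ 2 * ‖K.starProjection (‖y‖⁻¹ • y)‖ ^ 2 := by
      rw [K.norm_sq_starProjection_eq_norm_sq_sub_infDist_sq, norm_smul, norm_inv, norm_norm,
        inv_mul_cancel₀ (norm_ne_zero_iff.mpr hy), one_pow]
    _ = ‖K.starProjection y‖ ^ 2 := by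
      conv_rhs => rw [hy', map_smul, norm_smul, norm_norm, mul_pow]

theorem summable_norm_sq_starProjection {ι : Type*} {x : ι → H} (K : Submodule ℝ H)
    [FiniteDimensional ℝ K] (hx : ∀ v, Summable fun j => ⟪v, x j⟫ ^ 2) :
    Summable fun j => ‖K.starProjection (x j)‖ ^ 2 := by
  simp only [← (stdOrthonormalBasis ℝ K).sum_sq_inner_eq_norm_sq_starProjection]
  exact summable_sum fun i _ => hx _

theorem real_inner_sq_le_norm_sq_mul_norm_sq (v y : H) : ⟪v, y⟫ ^ 2 ≤ ‖v‖ ^ 2 * ‖y‖ ^ 2 := by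
  rw [← mul_pow, ← sq_abs]
  exact pow_le_pow_left₀ (abs_nonneg _) (abs_real_inner_le_norm v y) 2

theorem tsum_sq_inner_le {ι : Type*} {x : ι → H} (hx : Summable fun j => ‖x j‖ ^ 2) (v : H) :
    ∑' j, ⟪v, x j⟫ ^ 2 ≤ ‖v‖ ^ 2 * ∑' j, ‖x j‖ ^ 2 := by
  have hle j := real_inner_sq_le_norm_sq_mul_norm_sq v (x j)
  rw [← tsum_mul_left]
  exact (hx.mul_left _).of_nonneg_of_le (fun _ => sq_nonneg _) hle |>.tsum_le_tsum hle
    (hx.mul_left _)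

theorem exists_ne_zero_forall_inner_eq_zero (hinf : ¬ FiniteDimensional ℝ H) {s : Set H}
    (hs : s.Finite) : ∃ v ≠ 0, ∀ y ∈ s, ⟪v, y⟫ = 0 := by
  have : FiniteDimensional ℝ (Submodule.span ℝ s) := FiniteDimensional.span_of_finite ℝ hs
  have hspan : Submodule.span ℝ s ≠ ⊤ := fun h => by
    have : FiniteDimensional ℝ (⊤ : Submodule ℝ H) := h ▸ inferInstance
    exact hinf Submodule.topEquiv.finiteDimensional
  obtain ⟨v, hv, hv0⟩ := Submodule.ne_bot_iff _ |>.mp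
    (mt Submodule.orthogonal_eq_bot_iff.mp hspan)
  exact ⟨v, hv0, fun y hy => Submodule.inner_left_of_mem_orthogonal (Submodule.subset_span hy) hv⟩

theorem summable_sq_inner_of_lower_frame_bound {ι : Type*} {x : ι → H} {A : ℝ} (hA : 0 < A)
    (hlow : ∀ v, A * ‖v‖ ^ 2 ≤ ∑' j, ⟪v, x j⟫ ^ 2) (v : H) :
    Summable fun j => ⟪v, x j⟫ ^ 2 := by
  -- the junk value `∑' = 0` of a non-summable family forces `v = 0`
  by_contra hns
  have hv : v = 0 := by
    have : ‖v‖ ^ 2 ≤ 0 :=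
      nonpos_of_mul_nonpos_right (tsum_eq_zero_of_not_summable hns ▸ hlow v) hA
    exact norm_eq_zero.mp ((sq_nonpos_iff _).mp this)
  simp [hv] at hns

theorem not_summable_norm_sq_of_lower_frame_bound (hinf : ¬ FiniteDimensional ℝ H) {x : ℕ → H}
    {A : ℝ} (hA : 0 < A) (hlow : ∀ v, A * ‖v‖ ^ 2 ≤ ∑' j, ⟪v, x j⟫ ^ 2) :
    ¬ Summable fun j => ‖x j‖ ^ 2 := by
  intro hsum
  obtain ⟨N, hN⟩ := ((tendsto_sum_nat_add fun j => ‖x j‖ ^ 2).eventually (gt_mem_nhds hA)).exists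
  obtain ⟨v, hv, hvx⟩ := exists_ne_zero_forall_inner_eq_zero hinf ((Set.finite_Iio N).image x)
  have hhead : ∑ j ∈ Finset.range N, ⟪v, x j⟫ ^ 2 = 0 := Finset.sum_eq_zero fun j hj => by
    rw [hvx (x j) ⟨j, Finset.mem_range.mp hj, rfl⟩, zero_pow two_ne_zero]
  have hv2 : 0 < ‖v‖ ^ 2 := by positivity
  have := calc
    A * ‖v‖ ^ 2 ≤ ∑' j, ⟪v, x j⟫ ^ 2 := hlow v
    _ = ∑' j, ⟪v, x (j + N)⟫ ^ 2 := by
      rw [← (summable_sq_inner_of_lower_frame_bound hA hlow v).sum_add_tsum_nat_add N, hhead,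
        zero_add]
    _ ≤ ‖v‖ ^ 2 * ∑' j, ‖x (j + N)‖ ^ 2 := tsum_sq_inner_le ((summable_nat_add_iff N).mpr hsum) v
    _ < ‖v‖ ^ 2 * A := by gcongr
  linarith

end Real

theorem frame_normalized_sup_dist_finite_dim_eq_one_general
    {H : Type*} [NormedAddCommGroup H] [InnerProductSpace ℝ H]
    (hinf : ¬ FiniteDimensional ℝ H)
    (x : ℕ → H) (A B : ℝ) (hA : 0 < A)
    (hframe : ∀ v : H,
      A * ‖v‖ ^ 2 ≤ ∑' j, ⟪v, x j⟫ ^ 2 ∧ ∑' j, ⟪v, x j⟫ ^ 2 ≤ B * ‖v‖ ^ 2)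
    (E : Submodule ℝ H) (hE : FiniteDimensional ℝ E) :
    ⨆ j, Metric.infDist (‖x j‖⁻¹ • x j) (E : Set H) = 1 := by
  have hlow v := (hframe v).1
  have hle j : Metric.infDist (‖x j‖⁻¹ • x j) (E : Set H) ≤ 1 := calc
    _ ≤ dist (‖x j‖⁻¹ • x j) 0 := Metric.infDist_le_dist_of_mem E.zero_mem
    _ ≤ 1 := Metric.mem_closedBall.mp (inv_norm_smul_mem_unitClosedBall (x j))
  refine ciSup_eq_of_forall_le_of_forall_lt_exists_gt hle fun s hs => ?_
  by_contra! hdist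
  have hs2 : 0 < 1 - s ^ 2 := by nlinarith [(Metric.infDist_nonneg).trans (hdist 0)]
  exact not_summable_norm_sq_of_lower_frame_bound hinf hA hlow <|
    (summable_mul_right_iff hs2.ne').mp <| Summable.of_nonneg_of_le (fun j => by positivity)
      (fun j => E.norm_sq_mul_le_norm_sq_starProjection (hdist j))
      (summable_norm_sq_starProjection E (summable_sq_inner_of_lower_frame_bound hA hlow))

/-- If `(x j)` is a frame in an infinite-dimensional Hilbert space `H` with all `x j ≠ 0`
and `z j = x j / ‖x j‖`, then for every finite-dimensional subspace `E ⊆ H` we have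
`sup_j dist(z j, E) = 1`. -/
theorem frame_normalized_sup_dist_finite_dim_eq_one
    {H : Type*} [NormedAddCommGroup H] [InnerProductSpace ℝ H] [CompleteSpace H]
    (hinf : ¬ FiniteDimensional ℝ H)
    (x : ℕ → H) (A B : ℝ) (hA : 0 < A) (hAB : A ≤ B)
    (hframe : ∀ v : H,
      A * ‖v‖ ^ 2 ≤ ∑' j, ⟪v, x j⟫ ^ 2 ∧ ∑' j, ⟪v, x j⟫ ^ 2 ≤ B * ‖v‖ ^ 2)
    (hx : ∀ j, x j ≠ 0)
    (E : Submodule ℝ H) (hE : FiniteDimensional ℝ E) :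
    ⨆ j, Metric.infDist (‖x j‖⁻¹ • x j) (E : Set H) = 1 :=
  frame_normalized_sup_dist_finite_dim_eq_one_general hinf x A B hA hframe E hE
end

section
/- Let (x_j) be a frame in an infinite-dimensional Hilbert space H and E a finite-dimensional subspace. Then for every δ < 1 there exists an index j with dist(x_j/‖x_j‖, E) ≥ δ. -/
/-!
Suppose every normalized `x j` lies within `δ < 1` of `E`. Then the component of `x j` orthogonal
to `E` is at most `δ² / (1 - δ²)` times (in squared norm) its component in `E`, so by the upper
frame bound `∑ j ‖P_{Eᗮ} x j‖² ≤ δ² / (1 - δ²) · B · dim E`. On the other hand, by the lower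
frame bound every finite-dimensional `K ≤ Eᗮ` has `A · dim K ≤ ∑ j ‖P_K x j‖² ≤ ∑ j ‖P_{Eᗮ} x j‖²`,
and `Eᗮ` contains such `K` of every dimension because `H` is infinite-dimensional.
-/

open scoped RealInnerProductSpace

open Module

namespace Submodule

theorem exists_le_finrank_eq {𝕜 V : Type*} [DivisionRing 𝕜] [AddCommGroup V] [Module 𝕜 V]
    {W : Submodule 𝕜 V} (hW : ¬ FiniteDimensional 𝕜 W) (n : ℕ) :
    ∃ U ≤ W, FiniteDimensional 𝕜 U ∧ finrank 𝕜 U = n := by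
  have hn : (n : Cardinal) ≤ Module.rank 𝕜 W := by
    rw [FiniteDimensional, ← Module.rank_lt_aleph0_iff, not_lt] at hW
    exact Cardinal.natCast_lt_aleph0.le.trans hW
  obtain ⟨f, hf⟩ := exists_linearIndependent_of_le_rank hn
  have hf' : LinearIndependent 𝕜 (W.subtype ∘ f) := hf.map' _ W.ker_subtype
  refine ⟨span 𝕜 (Set.range (W.subtype ∘ f)), ?_,
    FiniteDimensional.span_of_finite 𝕜 (Set.finite_range _), ?_⟩
  · rw [span_le]
    rintro _ ⟨i, rfl⟩
    exact (f i).2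
  · rw [finrank_span_eq_card hf', Fintype.card_fin]

variable {𝕜 V : Type*} [RCLike 𝕜] [NormedAddCommGroup V] [InnerProductSpace 𝕜 V]

theorem not_finiteDimensional_orthogonal (K : Submodule 𝕜 V) [FiniteDimensional 𝕜 K]
    (h : ¬ FiniteDimensional 𝕜 V) : ¬ FiniteDimensional 𝕜 Kᗮ := by
  intro hKo
  have : FiniteDimensional 𝕜 ↥(K ⊔ Kᗮ) := finiteDimensional_sup K Kᗮ
  rw [sup_orthogonal_of_hasOrthogonalProjection] at this
  exact h (Module.Finite.equiv topEquiv)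

theorem norm_starProjection_le_of_le {K L : Submodule 𝕜 V} [K.HasOrthogonalProjection]
    [L.HasOrthogonalProjection] (h : K ≤ L) (x : V) :
    ‖K.starProjection x‖ ≤ ‖L.starProjection x‖ := by
  rw [← starProjection_comp_starProjection_of_le h]
  exact K.norm_starProjection_apply_le _

theorem infDist_eq_norm_starProjection_orthogonal (K : Submodule 𝕜 V)
    [K.HasOrthogonalProjection] (x : V) : Metric.infDist x K = ‖Kᗮ.starProjection x‖ := by
  rw [starProjection_orthogonal_val, starProjection_minimal, Metric.infDist_eq_iInf]
  simp only [dist_eq_norm]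
  rfl

end Submodule

section Frame

variable {H ι : Type*} [NormedAddCommGroup H] [InnerProductSpace ℝ H] {x : ι → H}

theorem sq_norm_starProjection_orthogonal_le {K : Submodule ℝ H} [K.HasOrthogonalProjection]
    {z : H} {δ : ℝ} (hδ : δ < 1) (h : Metric.infDist (‖z‖⁻¹ • z) K ≤ δ) :
    ‖Kᗮ.starProjection z‖ ^ 2 ≤ δ ^ 2 / (1 - δ ^ 2) * ‖K.starProjection z‖ ^ 2 := by
  have hδ0 : 0 ≤ δ := Metric.infDist_nonneg.trans h
  rw [K.infDist_eq_norm_starProjection_orthogonal, map_smul, norm_smul, norm_inv, norm_norm] at h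
  have hclose : ‖Kᗮ.starProjection z‖ ≤ δ * ‖z‖ := by
    rcases eq_or_ne z 0 with rfl | hz
    · simp
    · rwa [inv_mul_le_iff₀ (norm_pos_iff.mpr hz), mul_comm] at h
  have hpyth := K.norm_sq_eq_add_norm_sq_starProjection z
  rw [div_mul_eq_mul_div, le_div_iff₀ (by nlinarith)]
  nlinarith [pow_le_pow_left₀ (norm_nonneg _) hclose 2]

theorem summable_sq_inner_of_frame_lower_bound {A : ℝ} (hA : 0 < A)
    (hlower : ∀ v, A * ‖v‖ ^ 2 ≤ ∑' j, ⟪v, x j⟫ ^ 2) (v : H) :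
    Summable fun j => ⟪v, x j⟫ ^ 2 := by
  rcases eq_or_ne v 0 with rfl | hv
  · simp
  by_contra hs
  have := hlower v
  rw [tsum_eq_zero_of_not_summable hs] at this
  have : 0 < A * ‖v‖ ^ 2 := by positivity
  linarith

theorem hasSum_sq_norm_starProjection (hsum : ∀ v, Summable fun j => ⟪v, x j⟫ ^ 2)
    {K : Submodule ℝ H} [K.HasOrthogonalProjection] {κ : Type*} [Fintype κ]
    (e : OrthonormalBasis κ ℝ K) :
    HasSum (fun j => ‖K.starProjection (x j)‖ ^ 2) (∑ i, ∑' j, ⟪(e i : H), x j⟫ ^ 2) := by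
  convert hasSum_sum fun i _ => (hsum (e i : H)).hasSum with j
  rw [K.starProjection_apply, Submodule.norm_coe, ← e.sum_sq_inner_right]
  simp only [Submodule.inner_orthogonalProjectionOnto_eq_of_mem_left]

theorem mul_finrank_le_tsum_sq_norm_starProjection {A : ℝ} (hA : 0 < A)
    (hlower : ∀ v, A * ‖v‖ ^ 2 ≤ ∑' j, ⟪v, x j⟫ ^ 2) (K : Submodule ℝ H) [FiniteDimensional ℝ K] :
    A * finrank ℝ K ≤ ∑' j, ‖K.starProjection (x j)‖ ^ 2 := by
  let e := stdOrthonormalBasis ℝ K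
  rw [(hasSum_sq_norm_starProjection (summable_sq_inner_of_frame_lower_bound hA hlower) e).tsum_eq]
  calc A * finrank ℝ K = ∑ _i : Fin (finrank ℝ K), A := by simp [mul_comm]
    _ ≤ ∑ i, ∑' j, ⟪(e i : H), x j⟫ ^ 2 := Finset.sum_le_sum fun i _ => by
      simpa [Submodule.norm_coe, e.orthonormal.1 i] using hlower (e i)

theorem tsum_sq_norm_starProjection_le_mul_finrank
    (hsum : ∀ v, Summable fun j => ⟪v, x j⟫ ^ 2) {B : ℝ}
    (hupper : ∀ v, ∑' j, ⟪v, x j⟫ ^ 2 ≤ B * ‖v‖ ^ 2) (K : Submodule ℝ H) [FiniteDimensional ℝ K] :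
    ∑' j, ‖K.starProjection (x j)‖ ^ 2 ≤ B * finrank ℝ K := by
  let e := stdOrthonormalBasis ℝ K
  rw [(hasSum_sq_norm_starProjection hsum e).tsum_eq]
  calc ∑ i, ∑' j, ⟪(e i : H), x j⟫ ^ 2 ≤ ∑ _i : Fin (finrank ℝ K), B :=
        Finset.sum_le_sum fun i _ => by
          simpa [Submodule.norm_coe, e.orthonormal.1 i] using hupper (e i)
    _ = B * finrank ℝ K := by simp [mul_comm]

end Frame

theorem frame_normalized_exists_far_from_finite_dim_general
    {H : Type*} [NormedAddCommGroup H] [InnerProductSpace ℝ H]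
    (hinf : ¬ FiniteDimensional ℝ H)
    (x : ℕ → H) (A B : ℝ) (hA : 0 < A)
    (hframe : ∀ v : H,
      A * ‖v‖ ^ 2 ≤ ∑' j, ⟪v, x j⟫ ^ 2 ∧ ∑' j, ⟪v, x j⟫ ^ 2 ≤ B * ‖v‖ ^ 2)
    (E : Submodule ℝ H) (hE : FiniteDimensional ℝ E) :
    ∀ δ : ℝ, δ < 1 → ∃ j, δ ≤ Metric.infDist (‖x j‖⁻¹ • x j) (E : Set H) := by
  intro δ hδ
  by_contra! hnear
  have hsum := summable_sq_inner_of_frame_lower_bound hA fun v => (hframe v).1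
  set C := δ ^ 2 / (1 - δ ^ 2)
  have hδ0 : 0 ≤ δ := Metric.infDist_nonneg.trans (hnear 0).le
  have hC : 0 ≤ C := div_nonneg (sq_nonneg δ) (by nlinarith)
  obtain ⟨N, hN⟩ := exists_nat_gt (C * (B * finrank ℝ E) / A)
  obtain ⟨K, hKE, hK, hKN⟩ := Eᗮ.exists_le_finrank_eq (E.not_finiteDimensional_orthogonal hinf) N
  have hproj : ∀ j, ‖K.starProjection (x j)‖ ^ 2 ≤ C * ‖E.starProjection (x j)‖ ^ 2 := fun j =>
    calc ‖K.starProjection (x j)‖ ^ 2 ≤ ‖Eᗮ.starProjection (x j)‖ ^ 2 := by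
          gcongr; exact Submodule.norm_starProjection_le_of_le hKE _
      _ ≤ C * ‖E.starProjection (x j)‖ ^ 2 := sq_norm_starProjection_orthogonal_le hδ (hnear j).le
  have hbound : A * N ≤ C * (B * finrank ℝ E) := calc
    A * N = A * finrank ℝ K := by rw [hKN]
    _ ≤ ∑' j, ‖K.starProjection (x j)‖ ^ 2 :=
      mul_finrank_le_tsum_sq_norm_starProjection hA (fun v => (hframe v).1) K
    _ ≤ ∑' j, C * ‖E.starProjection (x j)‖ ^ 2 :=
      (hasSum_sq_norm_starProjection hsum (stdOrthonormalBasis ℝ K)).summable.tsum_le_tsum hproj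
        ((hasSum_sq_norm_starProjection hsum (stdOrthonormalBasis ℝ E)).summable.mul_left C)
    _ = C * ∑' j, ‖E.starProjection (x j)‖ ^ 2 := tsum_mul_left
    _ ≤ C * (B * finrank ℝ E) := by
      gcongr
      exact tsum_sq_norm_starProjection_le_mul_finrank hsum (fun v => (hframe v).2) E
  rw [div_lt_iff₀ hA] at hN
  linarith

/-- Let `(x j)` be a frame in an infinite-dimensional Hilbert space `H` (all `x j ≠ 0`) and
`E` a finite-dimensional subspace.  Then for every `δ < 1` there is an index `j` with
`dist(x j / ‖x j‖, E) ≥ δ`. -/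
theorem frame_normalized_exists_far_from_finite_dim
    {H : Type*} [NormedAddCommGroup H] [InnerProductSpace ℝ H] [CompleteSpace H]
    (hinf : ¬ FiniteDimensional ℝ H)
    (x : ℕ → H) (A B : ℝ) (hA : 0 < A) (hAB : A ≤ B)
    (hframe : ∀ v : H,
      A * ‖v‖ ^ 2 ≤ ∑' j, ⟪v, x j⟫ ^ 2 ∧ ∑' j, ⟪v, x j⟫ ^ 2 ≤ B * ‖v‖ ^ 2)
    (hx : ∀ j, x j ≠ 0)
    (E : Submodule ℝ H) (hE : FiniteDimensional ℝ E) :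
    ∀ δ : ℝ, δ < 1 → ∃ j, δ ≤ Metric.infDist (‖x j‖⁻¹ • x j) (E : Set H) :=
  frame_normalized_exists_far_from_finite_dim_general hinf x A B hA hframe E hE
end

section
/- For every n ≥ 2 there exist two orthonormal vectors v₁, v₂ in ℓ₂ⁿ such that for every subset J ⊆ {1,…,n} with |J| ≥ n − 2: (a) for every 1 ≤ j₀ < n/2, dist(v₁, span{e_j : j ∈ J, j ≥ j₀}) ≤ 4/√n; (b) for every n/2 ≤ j₀ ≤ n, dist(v₂, span{e_j : j ∈ J, j < j₀}) ≤ 4/√n. -/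
open scoped RealInnerProductSpace

/-!
Take for `v₁` and `v₂` the normalized indicator vectors of the upper and lower halves of the
coordinates; disjoint supports make them orthogonal. For a normalized indicator of `S`, the
distance to a span of coordinate vectors `e_j, j ∈ K`, is at most `√(#(S \ K) / #S)`. In (a)
every coordinate of the upper half is admissible, so only the at most two coordinates outside `J`
are lost; in (b) at most one more, next to `j₀`, is lost. Since `#S ≥ ⌊n/2⌋`, the squared
distance is at most `3 / ⌊n/2⌋ ≤ 16 / n`.
-/

open Finset

section NormalizedIndicator

variable {ι : Type*} [DecidableEq ι]

noncomputable def normalizedIndicator (S : Finset ι) : EuclideanSpace ℝ ι :=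
  WithLp.toLp 2 fun j => if j ∈ S then (√(#S : ℝ))⁻¹ else 0

@[simp]
lemma normalizedIndicator_apply (S : Finset ι) (j : ι) :
    normalizedIndicator S j = if j ∈ S then (√(#S : ℝ))⁻¹ else 0 :=
  rfl

lemma normalizedIndicator_apply_sq (S : Finset ι) (j : ι) :
    normalizedIndicator S j ^ 2 = if j ∈ S then (#S : ℝ)⁻¹ else 0 := by
  split_ifs with hj
  · rw [normalizedIndicator_apply, if_pos hj, inv_pow, Real.sq_sqrt (Nat.cast_nonneg _)]
  · simp [hj]

variable [Fintype ι]

lemma sum_compl_normalizedIndicator_sq (S K : Finset ι) :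
    ∑ j ∈ Kᶜ, normalizedIndicator S j ^ 2 = #(S \ K) / #S := by
  simp_rw [normalizedIndicator_apply_sq, sum_ite_mem, sum_const, nsmul_eq_mul,
    inter_comm, ← sdiff_eq_inter_compl, div_eq_mul_inv]

lemma norm_normalizedIndicator {S : Finset ι} (hS : S.Nonempty) :
    ‖normalizedIndicator S‖ = 1 := by
  have h := sum_compl_normalizedIndicator_sq S ∅
  rw [compl_empty, sdiff_empty, div_self (Nat.cast_ne_zero.2 hS.card_ne_zero)] at h
  simp only [EuclideanSpace.norm_eq, Real.norm_eq_abs, sq_abs, h, Real.sqrt_one]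

lemma inner_normalizedIndicator_of_disjoint {S T : Finset ι} (hST : Disjoint S T) :
    ⟪normalizedIndicator S, normalizedIndicator T⟫ = 0 := by
  refine (PiLp.inner_apply _ _).trans (sum_eq_zero fun j _ => ?_)
  by_cases hj : j ∈ S
  · simp [Finset.disjoint_left.1 hST hj]
  · simp [hj]

/-- Keeping the coordinates of `v` in `K` gives a point of the span. -/
lemma infDist_span_le_sqrt_sum_compl (v : EuclideanSpace ℝ ι) {s : Set (EuclideanSpace ℝ ι)}
    {K : Finset ι} (hK : ∀ j ∈ K, EuclideanSpace.single j (1 : ℝ) ∈ s) :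
    Metric.infDist v (Submodule.span ℝ s) ≤ √(∑ j ∈ Kᶜ, v j ^ 2) := by
  set w : EuclideanSpace ℝ ι := ∑ j ∈ K, v j • EuclideanSpace.single j (1 : ℝ)
  have hw : w ∈ Submodule.span ℝ s :=
    Submodule.sum_mem _ fun j hj => Submodule.smul_mem _ _ (Submodule.subset_span (hK j hj))
  have hvw : ∀ j, (v - w) j = if j ∈ K then 0 else v j := fun j => by
    by_cases hj : j ∈ K <;> simp [w, hj, Pi.single_apply]
  refine (Metric.infDist_le_dist_of_mem hw).trans_eq ?_
  rw [dist_eq_norm, EuclideanSpace.norm_eq, ← sum_add_sum_compl K,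
    sum_eq_zero fun j hj => by simp [hvw, hj], zero_add]
  exact congrArg _ (sum_congr rfl fun j hj => by simp [hvw, mem_compl.1 hj])

lemma card_sdiff_le_card_sub (S J : Finset ι) :
    #(S \ J) ≤ Fintype.card ι - #J :=
  (card_le_card (sdiff_subset_sdiff (subset_univ S) le_rfl)).trans_eq (card_univ_sdiff J)

lemma infDist_normalizedIndicator_span_single_le (S J : Finset ι) (P : ι → Prop)
    [DecidablePred P] :
    Metric.infDist (normalizedIndicator S)
        (Submodule.span ℝ {v | ∃ j ∈ J, P j ∧ v = EuclideanSpace.single j (1 : ℝ)}) ≤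
      √(((#(S \ J) + #(S.filter (¬P ·)) : ℕ) : ℝ) / #S) := by
  have hK : ∀ j ∈ J.filter P, EuclideanSpace.single j (1 : ℝ) ∈
      {v | ∃ j ∈ J, P j ∧ v = EuclideanSpace.single j (1 : ℝ)} := fun j hj =>
    ⟨j, (mem_filter.1 hj).1, (mem_filter.1 hj).2, rfl⟩
  have hsub : S \ J.filter P ⊆ S \ J ∪ S.filter (¬P ·) := fun j hj => by
    simp only [mem_sdiff, mem_filter, mem_union] at hj ⊢
    tauto
  refine (infDist_span_le_sqrt_sum_compl _ hK).trans ?_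
  rw [sum_compl_normalizedIndicator_sq]
  gcongr
  exact_mod_cast (card_le_card hsub).trans (card_union_le _ _)

end NormalizedIndicator

lemma sqrt_div_le_four_div_sqrt {k c n : ℕ} (hn : 0 < n) (hk : k ≤ 3) (hc : n ≤ 2 * c + 1) :
    √((k : ℝ) / c) ≤ 4 / √n := by
  obtain rfl | hc₀ := c.eq_zero_or_pos
  · simp only [Nat.cast_zero, div_zero, Real.sqrt_zero]
    positivity
  rw [show (4 : ℝ) / √n = √(16 / n) by
    rw [Real.sqrt_div' _ (Nat.cast_nonneg n), show (16 : ℝ) = 4 ^ 2 by norm_num,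
      Real.sqrt_sq (by norm_num)]]
  refine Real.sqrt_le_sqrt ?_
  rw [div_le_div_iff₀ (by exact_mod_cast hc₀) (by exact_mod_cast hn)]
  exact_mod_cast (by nlinarith : k * n ≤ 16 * c)

lemma card_filter_Iio_not_succ_lt_le_one {n : ℕ} (a : Fin n) {j₀ : ℕ}
    (h : (a : ℕ) ≤ j₀) :
    #((Iio a).filter fun j : Fin n => ¬(j : ℕ) + 1 < j₀) ≤ 1 :=
  card_le_one.2 fun i hi j hj => by
    simp only [mem_filter, mem_Iio, Fin.lt_def] at hi hj
    exact Fin.ext (by omega)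

/-- For every `n ≥ 2` there are orthonormal vectors `v₁, v₂` in `ℓ₂ⁿ` such that for any
`J ⊆ {1,…,n}` with `|J| ≥ n-2`:  `dist(v₁, span{e_j : j ∈ J, j ≥ j₀}) ≤ 4/√n` whenever
`1 ≤ j₀ < n/2`, and `dist(v₂, span{e_j : j ∈ J, j < j₀}) ≤ 4/√n` whenever `n/2 ≤ j₀ ≤ n`.
(Indices `j` are 1-indexed, i.e. a coordinate `j : Fin n` corresponds to `(j : ℕ) + 1`.) -/
theorem exists_orthonormal_pair_close_to_tails
    (n : ℕ) (hn : 2 ≤ n) :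
    ∃ v₁ v₂ : EuclideanSpace ℝ (Fin n),
      ‖v₁‖ = 1 ∧ ‖v₂‖ = 1 ∧ ⟪v₁, v₂⟫ = 0 ∧
      ∀ J : Finset (Fin n), n - 2 ≤ J.card →
        (∀ j₀ : ℕ, 1 ≤ j₀ → (j₀ : ℝ) < (n : ℝ) / 2 →
          Metric.infDist v₁
            ((Submodule.span ℝ
              {v | ∃ j ∈ J, j₀ ≤ (j : ℕ) + 1 ∧ v = EuclideanSpace.single j (1 : ℝ)} :
                Submodule ℝ (EuclideanSpace ℝ (Fin n))) : Set (EuclideanSpace ℝ (Fin n)))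
            ≤ 4 / Real.sqrt n) ∧
        (∀ j₀ : ℕ, (n : ℝ) / 2 ≤ (j₀ : ℝ) → j₀ ≤ n →
          Metric.infDist v₂
            ((Submodule.span ℝ
              {v | ∃ j ∈ J, (j : ℕ) + 1 < j₀ ∧ v = EuclideanSpace.single j (1 : ℝ)} :
                Submodule ℝ (EuclideanSpace ℝ (Fin n))) : Set (EuclideanSpace ℝ (Fin n)))
            ≤ 4 / Real.sqrt n) := by
  set a : Fin n := ⟨n / 2, by omega⟩
  have ha : (a : ℕ) = n / 2 := rfl
  have hdisj : Disjoint (Ici a) (Iio a) :=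
    disjoint_left.2 fun j hj hj' => (mem_Iio.1 hj').not_ge (mem_Ici.1 hj)
  refine ⟨normalizedIndicator (Ici a), normalizedIndicator (Iio a),
    norm_normalizedIndicator ⟨a, mem_Ici.2 le_rfl⟩,
    norm_normalizedIndicator ⟨⟨0, by omega⟩, mem_Iio.2 (Fin.mk_lt_mk.2 (by omega))⟩,
    inner_normalizedIndicator_of_disjoint hdisj, fun J hJ => ?_⟩
  have hJc (S : Finset (Fin n)) : #(S \ J) ≤ 2 :=
    (card_sdiff_le_card_sub S J).trans (by rw [Fintype.card_fin]; omega)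
  refine ⟨fun j₀ _ hj₀ => ?_, fun j₀ hj₀ _ => ?_⟩
  · have hj₀ : 2 * j₀ < n := by
      exact_mod_cast (by push_cast; linarith : ((2 * j₀ : ℕ) : ℝ) < n)
    have hall : (Ici a).filter (fun j : Fin n => ¬j₀ ≤ (j : ℕ) + 1) = ∅ :=
      filter_eq_empty_iff.2 fun j hj => by have := Fin.le_def.1 (mem_Ici.1 hj); omega
    refine (infDist_normalizedIndicator_span_single_le _ J _).trans
      (sqrt_div_le_four_div_sqrt ?_ ?_ ?_)
    · omega
    · have := hJc (Ici a)
      rw [hall, card_empty]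
      omega
    · rw [Fin.card_Ici]; omega
  · have hj₀ : n ≤ 2 * j₀ := by
      exact_mod_cast (by push_cast; linarith : (n : ℝ) ≤ ((2 * j₀ : ℕ) : ℝ))
    have hlast := card_filter_Iio_not_succ_lt_le_one a (j₀ := j₀) (by omega)
    refine (infDist_normalizedIndicator_span_single_le _ J _).trans
      (sqrt_div_le_four_div_sqrt ?_ ?_ ?_)
    · omega
    · have := hJc (Iio a)
      omega
    · rw [Fin.card_Iio]; omega
end

section
/- Let (y_i) be a sequence of pairwise orthogonal vectors in ℓ₂ with α ≤ ‖y_i‖ ≤ β (0 < α ≤ β) forming the rows of an infinite matrix whose columns x_j all lie in ℓ₂. Then the columns (x_j) form a frame in their closed linear span with bounds A = α² and B = β²: α²‖x‖² ≤ ∑_j |⟨x, x_j⟩|² ≤ β²‖x‖² for all x in the closed span of (x_j). -/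
open scoped RealInnerProductSpace

/-!
Multiplying the matrix by `x ∈ ℓ₂` from the left gives the vector `(⟪x, x_j⟫)_j`, which is the
coordinate sequence of the orthogonal series `∑ᵢ xᵢ yᵢ`. By Pythagoras its squared norm
`∑ⱼ ⟪x, x_j⟫²` equals `∑ᵢ xᵢ² ‖yᵢ‖²`, which lies between `α² ‖x‖²` and `β² ‖x‖²`.
-/

theorem exists_hasSum_and_hasSum_norm_sq_of_pairwise_inner_eq_zero {𝕜 E ι : Type*} [RCLike 𝕜]
    [NormedAddCommGroup E] [InnerProductSpace 𝕜 E] [CompleteSpace E] {v : ι → E}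
    (hv : Pairwise fun i j => inner 𝕜 (v i) (v j) = 0) (hsq : Summable fun i => ‖v i‖ ^ 2) :
    ∃ S, HasSum v S ∧ HasSum (fun i => ‖v i‖ ^ 2) (‖S‖ ^ 2) := by
  have hV : OrthogonalFamily 𝕜 (fun i => 𝕜 ∙ v i) fun i => (𝕜 ∙ v i).subtypeₗᵢ :=
    OrthogonalFamily.of_pairwise fun i j hij =>
      Submodule.isOrtho_span.2 fun u hu w hw => by rw [hu, hw]; exact hv hij
  let f : ∀ i, 𝕜 ∙ v i := fun i => ⟨v i, Submodule.mem_span_singleton_self _⟩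
  obtain ⟨S, hS⟩ : Summable v := (hV.summable_iff_norm_sq_summable f).2 hsq
  refine ⟨S, hS, ?_⟩
  have hpartial : ∀ s : Finset ι, ‖∑ i ∈ s, v i‖ ^ 2 = ∑ i ∈ s, ‖v i‖ ^ 2 := hV.norm_sum f
  simpa only [HasSum, hpartial] using hS.norm.pow 2

theorem lp.hasSum_sq {ι : Type*} (f : lp (fun _ : ι => ℝ) 2) :
    HasSum (fun i => f i ^ 2) (‖f‖ ^ 2) := by
  simpa [Real.inner_apply, ← sq, real_inner_self_eq_norm_sq] using lp.hasSum_inner (𝕜 := ℝ) f f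

section OrthogonalRows

variable {ι κ : Type*} (a : ι → κ → ℝ) (hrow : ∀ i, Memℓp (fun j => a i j) 2)
  (hcol : ∀ j, Memℓp (fun i => a i j) 2)

theorem apply_eq_inner_of_hasSum_smul_row (x : lp (fun _ : ι => ℝ) 2) (S : lp (fun _ : κ => ℝ) 2)
    (hS : HasSum (fun i => x i • (⟨fun j => a i j, hrow i⟩ : lp (fun _ : κ => ℝ) 2)) S) (j : κ) :
    S j = ⟪x, (⟨fun i => a i j, hcol j⟩ : lp (fun _ : ι => ℝ) 2)⟫ := by
  have hSj : HasSum (fun i => x i * a i j) (S j) :=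
    hS.map (lp.evalCLM ℝ _ 2 j) (lp.evalCLM ℝ _ 2 j).continuous
  have hinner := lp.hasSum_inner (𝕜 := ℝ) x (⟨fun i => a i j, hcol j⟩ : lp (fun _ : ι => ℝ) 2)
  simp only [Real.inner_apply] at hinner
  exact hSj.unique hinner

theorem hasSum_sq_inner_col
    (horth : Pairwise fun i i' =>
      ⟪(⟨fun j => a i j, hrow i⟩ : lp (fun _ : κ => ℝ) 2), ⟨fun j => a i' j, hrow i'⟩⟫ = 0)
    (x : lp (fun _ : ι => ℝ) 2)
    (hsum : Summable fun i =>
      ‖x i • (⟨fun j => a i j, hrow i⟩ : lp (fun _ : κ => ℝ) 2)‖ ^ 2) :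
    HasSum (fun j => ⟪x, (⟨fun i => a i j, hcol j⟩ : lp (fun _ : ι => ℝ) 2)⟫ ^ 2)
      (∑' i, ‖x i • (⟨fun j => a i j, hrow i⟩ : lp (fun _ : κ => ℝ) 2)‖ ^ 2) := by
  have hv : Pairwise fun i i' => ⟪x i • (⟨fun j => a i j, hrow i⟩ : lp (fun _ : κ => ℝ) 2),
      x i' • (⟨fun j => a i' j, hrow i'⟩ : lp (fun _ : κ => ℝ) 2)⟫ = 0 := fun i i' h => by
    dsimp only
    rw [real_inner_smul_left, real_inner_smul_right, horth h, mul_zero, mul_zero]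
  obtain ⟨S, hS, hnorm⟩ := exists_hasSum_and_hasSum_norm_sq_of_pairwise_inner_eq_zero hv hsum
  rw [hnorm.tsum_eq]
  simpa only [apply_eq_inner_of_hasSum_smul_row a hrow hcol x S hS] using lp.hasSum_sq S

end OrthogonalRows

theorem orthogonal_rows_columns_frame_general
    (a : ℕ → ℕ → ℝ)
    (hrow : ∀ i, Memℓp (fun j => a i j) 2)
    (hcol : ∀ j, Memℓp (fun i => a i j) 2)
    (α β : ℝ) (hα : 0 < α)
    (horth : ∀ i i' : ℕ, i ≠ i' →
      ⟪(⟨fun j => a i j, hrow i⟩ : lp (fun _ : ℕ => ℝ) 2),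
        (⟨fun j => a i' j, hrow i'⟩ : lp (fun _ : ℕ => ℝ) 2)⟫ = 0)
    (hnorm : ∀ i, α ≤ ‖(⟨fun j => a i j, hrow i⟩ : lp (fun _ : ℕ => ℝ) 2)‖ ∧
        ‖(⟨fun j => a i j, hrow i⟩ : lp (fun _ : ℕ => ℝ) 2)‖ ≤ β) :
    ∀ x ∈ (Submodule.span ℝ
        (Set.range fun j => (⟨fun i => a i j, hcol j⟩ : lp (fun _ : ℕ => ℝ) 2))).topologicalClosure,
      α ^ 2 * ‖x‖ ^ 2 ≤
          ∑' j, ⟪x, (⟨fun i => a i j, hcol j⟩ : lp (fun _ : ℕ => ℝ) 2)⟫ ^ 2 ∧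
      ∑' j, ⟪x, (⟨fun i => a i j, hcol j⟩ : lp (fun _ : ℕ => ℝ) 2)⟫ ^ 2 ≤
          β ^ 2 * ‖x‖ ^ 2 := by
  intro x _
  set y : ℕ → lp (fun _ : ℕ => ℝ) 2 := fun i => ⟨fun j => a i j, hrow i⟩
  have hx := lp.hasSum_sq x
  have hsmul : ∀ i, ‖x i • y i‖ ^ 2 = ‖y i‖ ^ 2 * x i ^ 2 := fun i => by
    rw [norm_smul, mul_pow, Real.norm_eq_abs, sq_abs, mul_comm]
  have hlow : ∀ i, α ^ 2 * x i ^ 2 ≤ ‖x i • y i‖ ^ 2 := fun i => by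
    rw [hsmul]; gcongr; exact (hnorm i).1
  have hup : ∀ i, ‖x i • y i‖ ^ 2 ≤ β ^ 2 * x i ^ 2 := fun i => by
    rw [hsmul]; gcongr; exact (hnorm i).2
  have hsum : Summable fun i => ‖x i • y i‖ ^ 2 :=
    .of_nonneg_of_le (fun _ => sq_nonneg _) hup (hx.summable.mul_left _)
  rw [(hasSum_sq_inner_col a hrow hcol horth x hsum).tsum_eq]
  exact ⟨hasSum_le hlow (hx.mul_left _) hsum.hasSum, hasSum_le hup hsum.hasSum (hx.mul_left _)⟩

/-- If the rows `y i = (a i ·)` of an infinite matrix are pairwise orthogonal vectors of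
`ℓ₂` with `α ≤ ‖y i‖ ≤ β` (`0 < α ≤ β`), and the columns `x j = (a · j)` lie in `ℓ₂`,
then the columns form a frame with bounds `α², β²` in their closed linear span. -/
theorem orthogonal_rows_columns_frame
    (a : ℕ → ℕ → ℝ)
    (hrow : ∀ i, Memℓp (fun j => a i j) 2)
    (hcol : ∀ j, Memℓp (fun i => a i j) 2)
    (α β : ℝ) (hα : 0 < α) (hαβ : α ≤ β)
    (horth : ∀ i i' : ℕ, i ≠ i' →
      ⟪(⟨fun j => a i j, hrow i⟩ : lp (fun _ : ℕ => ℝ) 2),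
        (⟨fun j => a i' j, hrow i'⟩ : lp (fun _ : ℕ => ℝ) 2)⟫ = 0)
    (hnorm : ∀ i, α ≤ ‖(⟨fun j => a i j, hrow i⟩ : lp (fun _ : ℕ => ℝ) 2)‖ ∧
        ‖(⟨fun j => a i j, hrow i⟩ : lp (fun _ : ℕ => ℝ) 2)‖ ≤ β) :
    ∀ x ∈ (Submodule.span ℝ
        (Set.range fun j => (⟨fun i => a i j, hcol j⟩ : lp (fun _ : ℕ => ℝ) 2))).topologicalClosure,
      α ^ 2 * ‖x‖ ^ 2 ≤
          ∑' j, ⟪x, (⟨fun i => a i j, hcol j⟩ : lp (fun _ : ℕ => ℝ) 2)⟫ ^ 2 ∧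
      ∑' j, ⟪x, (⟨fun i => a i j, hcol j⟩ : lp (fun _ : ℕ => ℝ) 2)⟫ ^ 2 ≤
          β ^ 2 * ‖x‖ ^ 2 :=
  orthogonal_rows_columns_frame_general a hrow hcol α β hα horth hnorm
end
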